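/- Let x, y ∈ ℝ^d with ⟨x, ∇U(x)⟩ ≥ μ|x|² − μ′d (dissipativity) and |∇U(x)| ≤ L₁′√d + L₁|x| (linear growth). Then for any h with 0 < h ≤ min(1, 1/(2L₁), 1/(2L₁′), μ/(32L₁²)), the drift step satisfies |x − ∇U(x)h|² ≤ (1 − 3μh/2)|x|² + 8L₁²h²|x|² + 8L₁′²h²d + 2μ′dh; in particular |x − ∇U(x)h|² ≤ (1 − μh)|x|² + (4L₁′ + 2μ′)dh. -/

import Mathlib

set_option maxHeartbeats 1000000


/-- One-step drift bound: if `⟨x, ∇U(x)⟩ ≥ μ|x|² − μ′d` and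
`|∇U(x)| ≤ L₁′√d + L₁|x|`, then for stepsize
`0 < h ≤ min(1, 1/(2L₁), 1/(2L₁′), μ/(32L₁²))`,
`|x − ∇U(x)h|² ≤ (1 − 3μh/2)|x|² + 8L₁²h²|x|² + 8L₁′²h²d + 2μ′dh`, and in
particular `|x − ∇U(x)h|² ≤ (1 − μh)|x|² + (4L₁′ + 2μ′)dh`. -/
theorem drift_step_contraction
    (d : ℕ) (U : EuclideanSpace ℝ (Fin d) → ℝ) (μ μ' L₁ L₁' h : ℝ)
    (hμ : 0 < μ) (hμ' : 0 < μ') (hL₁ : 0 < L₁) (hL₁' : 0 < L₁')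
    (x y : EuclideanSpace ℝ (Fin d))
    (hdis : (inner ℝ x (gradient U x) : ℝ) ≥ μ * ‖x‖ ^ 2 - μ' * d)
    (hgrow : ‖gradient U x‖ ≤ L₁' * Real.sqrt d + L₁ * ‖x‖)
    (hh0 : 0 < h)
    (hh : h ≤ min 1 (min (1 / (2 * L₁)) (min (1 / (2 * L₁')) (μ / (32 * L₁ ^ 2))))) :
    ‖x - h • gradient U x‖ ^ 2
        ≤ (1 - 3 * μ * h / 2) * ‖x‖ ^ 2 + 8 * L₁ ^ 2 * h ^ 2 * ‖x‖ ^ 2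
          + 8 * L₁' ^ 2 * h ^ 2 * d + 2 * μ' * d * h ∧
    ‖x - h • gradient U x‖ ^ 2
        ≤ (1 - μ * h) * ‖x‖ ^ 2 + (4 * L₁' + 2 * μ') * d * h := by
  set g := gradient U x with hg
  have hh1 : h ≤ 1 := le_trans hh (min_le_left _ _)
  have hhL1' : h ≤ 1 / (2 * L₁') :=
    le_trans hh (le_trans (min_le_right _ _) (le_trans (min_le_right _ _) (min_le_left _ _)))
  have hhmu : h ≤ μ / (32 * L₁ ^ 2) :=
    le_trans hh (le_trans (min_le_right _ _) (le_trans (min_le_right _ _) (min_le_right _ _)))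
  have hd : (0 : ℝ) ≤ d := Nat.cast_nonneg d
  have hsq : Real.sqrt d ^ 2 = d := Real.sq_sqrt hd
  have hexp : ‖x - h • g‖ ^ 2 = ‖x‖ ^ 2 - 2 * h * (inner ℝ x g : ℝ) + h ^ 2 * ‖g‖ ^ 2 := by
    rw [norm_sub_sq_real, real_inner_smul_right, norm_smul, Real.norm_eq_abs,
      abs_of_pos hh0]
    ring
  have hg2 : ‖g‖ ^ 2 ≤ 2 * L₁' ^ 2 * d + 2 * L₁ ^ 2 * ‖x‖ ^ 2 := by
    have h1 : ‖g‖ ^ 2 ≤ (L₁' * Real.sqrt d + L₁ * ‖x‖) ^ 2 := by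
      apply pow_le_pow_left₀ (norm_nonneg _) hgrow
    have h2 : (L₁' * Real.sqrt d + L₁ * ‖x‖) ^ 2 ≤ 2 * L₁' ^ 2 * d + 2 * L₁ ^ 2 * ‖x‖ ^ 2 := by
      nlinarith [sq_nonneg (L₁' * Real.sqrt d - L₁ * ‖x‖), hsq]
    linarith
  have key : ‖x - h • g‖ ^ 2 ≤ (1 - 2 * μ * h) * ‖x‖ ^ 2 + 2 * L₁ ^ 2 * h ^ 2 * ‖x‖ ^ 2
      + 2 * L₁' ^ 2 * h ^ 2 * d + 2 * μ' * d * h := by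
    rw [hexp]
    nlinarith [sq_nonneg h, mul_le_mul_of_nonneg_left hg2 (sq_nonneg h),
      mul_le_mul_of_nonneg_left hdis (le_of_lt hh0)]
  have hmu32 : 32 * L₁ ^ 2 * h ≤ μ := by
    rw [le_div_iff₀ (by positivity)] at hhmu; linarith
  have hL1'2 : 2 * L₁' * h ≤ 1 := by
    rw [le_div_iff₀ (by positivity)] at hhL1'; linarith
  have c0 : 0 ≤ μ * h * ‖x‖ ^ 2 :=
    mul_nonneg (mul_nonneg hμ.le hh0.le) (sq_nonneg _)
  have c0' : 0 ≤ L₁ ^ 2 * h ^ 2 * ‖x‖ ^ 2 :=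
    mul_nonneg (mul_nonneg (sq_nonneg _) (sq_nonneg _)) (sq_nonneg _)
  have c0'' : 0 ≤ L₁' ^ 2 * h ^ 2 * (d : ℝ) :=
    mul_nonneg (mul_nonneg (sq_nonneg _) (sq_nonneg _)) hd
  have c1 : 2 * L₁ ^ 2 * h ^ 2 * ‖x‖ ^ 2 ≤ μ * h * ‖x‖ ^ 2 := by
    apply mul_le_mul_of_nonneg_right _ (sq_nonneg _)
    nlinarith
  have c2 : 2 * L₁' ^ 2 * h ^ 2 * (d : ℝ) ≤ 4 * L₁' * d * h := by
    have h1 : 2 * L₁' ^ 2 * h ^ 2 ≤ 4 * L₁' * h := by nlinarith [mul_le_mul_of_nonneg_left hL1'2 (mul_nonneg hL₁'.le hh0.le), mul_nonneg hL₁'.le hh0.le]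
    calc 2 * L₁' ^ 2 * h ^ 2 * (d : ℝ) ≤ 4 * L₁' * h * d :=
          mul_le_mul_of_nonneg_right h1 hd
      _ = 4 * L₁' * d * h := by ring
  constructor
  · linarith
  · linarith
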